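/- For every integer n ≥ 5, the function y ↦ (|y|² − 1)/(1 + |y|²)^{n−1} is Lebesgue-integrable on ℝ^n, and the number a_n := ∫_{ℝ^n} (|y|² − 1)/(1 + |y|²)^{n−1} dy is strictly positive. -/

import Mathlib

/-!
The integrand is bounded by `(1 + |y|²)^{-(n-2)}`, which is integrable because `2(n-2) > n`.
In polar coordinates the integral is a positive multiple of `∫₀^∞ f` with
`f r = r^{n-1} (r² - 1) / (1 + r²)^{n-1}`, and the substitution `r ↦ 1/r` gives
`2 ∫₀^∞ f = ∫₀^∞ (f r + f (1/r) / r²) dr = ∫₀^∞ r^{n-5} (r² - 1)² / (1 + r²)^{n-2} dr > 0`.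
-/

open MeasureTheory Set Real Module

section Inversion

variable {E : Type*} [NormedAddCommGroup E] [NormedSpace ℝ E]

theorem integral_comp_inv_Ioi (f : ℝ → E) :
    ∫ x in Ioi 0, (x ^ 2)⁻¹ • f x⁻¹ = ∫ x in Ioi 0, f x := by
  rw [← integral_comp_rpow_Ioi f (p := -1) (by norm_num)]
  refine setIntegral_congr_fun measurableSet_Ioi fun x (hx : 0 < x) => ?_
  norm_num [rpow_neg_one, rpow_neg hx.le]

theorem integrableOn_comp_inv_Ioi_iff (f : ℝ → E) :
    IntegrableOn (fun x => (x ^ 2)⁻¹ • f x⁻¹) (Ioi 0) ↔ IntegrableOn f (Ioi 0) := by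
  rw [← integrableOn_Ioi_comp_rpow_iff f (p := -1) (by norm_num)]
  refine integrableOn_congr_fun (fun x (hx : 0 < x) => ?_) measurableSet_Ioi
  norm_num [rpow_neg_one, rpow_neg hx.le]

end Inversion

theorem integral_Ioi_pos_of_add_comp_inv_pos {f : ℝ → ℝ} (hf : IntegrableOn f (Ioi 0))
    (h_nonneg : ∀ x ∈ Ioi 0, 0 ≤ f x + (x ^ 2)⁻¹ * f x⁻¹)
    (h_pos : ∀ x ∈ Ioi 1, 0 < f x + (x ^ 2)⁻¹ * f x⁻¹) :
    0 < ∫ x in Ioi 0, f x := by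
  have hf_inv : IntegrableOn (fun x => (x ^ 2)⁻¹ * f x⁻¹) (Ioi 0) :=
    (integrableOn_comp_inv_Ioi_iff f).2 hf
  have h_sum : ∫ x in Ioi 0, (f x + (x ^ 2)⁻¹ * f x⁻¹) = 2 * ∫ x in Ioi 0, f x := by
    rw [integral_add hf hf_inv]
    simp only [← smul_eq_mul, integral_comp_inv_Ioi]
    ring
  have h_sum_pos : 0 < ∫ x in Ioi 0, (f x + (x ^ 2)⁻¹ * f x⁻¹) := by
    rw [setIntegral_pos_iff_support_of_nonneg_ae
      ((ae_restrict_iff' measurableSet_Ioi).2 (.of_forall h_nonneg)) (hf.add hf_inv)]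
    calc (0 : ENNReal) < volume (Ioi (1 : ℝ)) := by simp
      _ ≤ _ := measure_mono fun x (hx : 1 < x) => mem_inter (h_pos x hx).ne' (one_pos.trans hx)
  linarith

theorem pow_mul_sq_sub_one_div_add_comp_inv {n : ℕ} (hn : 5 ≤ n) {x : ℝ} (hx : 0 < x) :
    x ^ (n - 1) * ((x ^ 2 - 1) / (1 + x ^ 2) ^ (n - 1)) +
        (x ^ 2)⁻¹ * (x⁻¹ ^ (n - 1) * ((x⁻¹ ^ 2 - 1) / (1 + x⁻¹ ^ 2) ^ (n - 1))) =
      x ^ (n - 5) * ((x ^ 2 - 1) ^ 2 / (1 + x ^ 2) ^ (n - 2)) := by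
  obtain ⟨m, rfl⟩ : ∃ m, n = m + 5 := ⟨n - 5, by omega⟩
  simp only [show m + 5 - 1 = m + 4 by omega, show m + 5 - 2 = m + 3 by omega,
    show m + 5 - 5 = m by omega]
  rw [show 1 + x⁻¹ ^ 2 = (1 + x ^ 2) / x ^ 2 by field_simp; ring]
  simp only [inv_pow, div_pow, pow_succ]
  field_simp
  ring

theorem abs_sub_one_div_one_add_pow_succ_le {s : ℝ} (hs : 0 ≤ s) (k : ℕ) :
    |(s - 1) / (1 + s) ^ (k + 1)| ≤ ((1 + s) ^ k)⁻¹ := by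
  have h_abs : |s - 1| ≤ 1 + s := abs_le.2 ⟨by linarith, by linarith⟩
  have h_pos : 0 < (1 + s) ^ k := by positivity
  rw [abs_div, abs_of_pos (by positivity : 0 < (1 + s) ^ (k + 1)), pow_succ,
    div_le_iff₀ (by positivity), inv_mul_cancel_left₀ h_pos.ne']
  exact h_abs

section AddHaar

variable {E : Type*} [NormedAddCommGroup E] [NormedSpace ℝ E] [FiniteDimensional ℝ E]
  [MeasurableSpace E] [BorelSpace E] (μ : Measure E) [μ.IsAddHaarMeasure]

theorem integrable_norm_sq_sub_one_div_one_add_norm_sq_pow {k : ℕ}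
    (hk : finrank ℝ E + 2 < 2 * k) :
    Integrable (fun x => (‖x‖ ^ 2 - 1) / (1 + ‖x‖ ^ 2) ^ k) μ := by
  obtain ⟨j, rfl⟩ : ∃ j, k = j + 1 := ⟨k - 1, by omega⟩
  have h_dom := integrable_rpow_neg_one_add_norm_sq (μ := μ) (r := 2 * j)
    (by exact_mod_cast (by omega : finrank ℝ E < 2 * j))
  refine h_dom.mono' (by fun_prop : Measurable _).aestronglyMeasurable (.of_forall fun x => ?_)
  rw [norm_eq_abs, show -(2 * j : ℝ) / 2 = -(j : ℝ) by ring, rpow_neg (by positivity),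
    rpow_natCast]
  exact abs_sub_one_div_one_add_pow_succ_le (sq_nonneg _) j

theorem integral_norm_sq_sub_one_div_one_add_norm_sq_pow_pos (hE : 5 ≤ finrank ℝ E) :
    0 < ∫ x, (‖x‖ ^ 2 - 1) / (1 + ‖x‖ ^ 2) ^ (finrank ℝ E - 1) ∂μ := by
  have : Nontrivial E := nontrivial_of_finrank_pos (R := ℝ) (by omega)
  set n := finrank ℝ E
  let f : ℝ → ℝ := fun t => (t ^ 2 - 1) / (1 + t ^ 2) ^ (n - 1)
  have h_radial : IntegrableOn (fun t => t ^ (n - 1) * f t) (Ioi 0) :=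
    (integrable_fun_norm_addHaar μ (f := f)).1
      (integrable_norm_sq_sub_one_div_one_add_norm_sq_pow μ (by omega))
  have h_radial_pos : 0 < ∫ t in Ioi 0, t ^ (n - 1) * f t := by
    refine integral_Ioi_pos_of_add_comp_inv_pos h_radial (fun x (hx : 0 < x) => ?_)
      (fun x (hx : 1 < x) => ?_) <;>
    rw [pow_mul_sq_sub_one_div_add_comp_inv hE (by positivity)]
    · positivity
    · have : 0 < x ^ 2 - 1 := by nlinarith
      positivity
  have h_ball : 0 < μ.real (Metric.ball 0 1) :=
    ENNReal.toReal_pos (Metric.measure_ball_pos μ 0 one_pos).ne' measure_ball_lt_top.ne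
  rw [integral_fun_norm_addHaar μ f, nsmul_eq_mul, smul_eq_mul]
  positivity

end AddHaar

/-- For every `n ≥ 5`, the function `y ↦ (|y|²−1)/(1+|y|²)^(n−1)` is Lebesgue-integrable
on `ℝⁿ` and `a_n := ∫_{ℝⁿ} (|y|²−1)/(1+|y|²)^(n−1) dy > 0`. -/
theorem integrable_and_pos_a_n (n : ℕ) (hn : 5 ≤ n) :
    Integrable (fun y : EuclideanSpace ℝ (Fin n) => (‖y‖ ^ 2 - 1) / (1 + ‖y‖ ^ 2) ^ (n - 1)) ∧
      0 < ∫ y : EuclideanSpace ℝ (Fin n), (‖y‖ ^ 2 - 1) / (1 + ‖y‖ ^ 2) ^ (n - 1) := by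
  have h_dim : finrank ℝ (EuclideanSpace ℝ (Fin n)) = n := finrank_euclideanSpace_fin
  refine ⟨integrable_norm_sq_sub_one_div_one_add_norm_sq_pow volume (by rw [h_dim]; omega), ?_⟩
  have h_pos := integral_norm_sq_sub_one_div_one_add_norm_sq_pow_pos
    (E := EuclideanSpace ℝ (Fin n)) volume (by rw [h_dim]; exact hn)
  rwa [h_dim] at h_pos
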